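/- Let G be a finite group, π a set of primes, and α, β characters of G such that χ = αβ is irreducible. Suppose that for every g ∈ G with |α(g)| = α(1), the root of unity α(g)/α(1) has π-number order, and for every g with |β(g)| = β(1), the root of unity β(g)/β(1) has π'-number order. Then ker χ = ker α ∩ ker β. -/

import Mathlib

/-!
The eigenvalues of `ρ g` are roots of unity, so `‖α g‖ ≤ α 1` and `‖β g‖ ≤ β 1`. If `χ g = χ 1`,
both are equalities and `ζ = α g / α 1` is a root of unity with `ζ⁻¹ = β g / β 1`; its order is
then both a π-number and a π'-number, hence `ζ = 1`.
-/

open CategoryTheory MonoidalCategory FDRep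

namespace Module.End

variable {K V : Type*} [NormedField K] [AddCommGroup V] [Module K V]

lemma norm_eq_one_of_hasEigenvalue_of_pow_eq_one {f : End K V} {n : ℕ} (hn : n ≠ 0)
    (hf : f ^ n = 1) {μ : K} (hμ : f.HasEigenvalue μ) : ‖μ‖ = 1 := by
  obtain ⟨v, hv⟩ := hμ.exists_hasEigenvector
  have hμn : μ ^ n = 1 := by
    have h : (μ ^ n - 1) • v = 0 := by
      rw [sub_smul, one_smul, sub_eq_zero, ← hv.pow_apply n, hf, one_apply]
    exact sub_eq_zero.mp ((smul_eq_zero.mp h).resolve_right hv.2)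
  rw [← pow_eq_one_iff_of_nonneg (norm_nonneg μ) hn, ← norm_pow, hμn, norm_one]

variable [IsAlgClosed K] [FiniteDimensional K V]

lemma norm_trace_le_finrank_of_pow_eq_one {f : End K V} {n : ℕ} (hn : n ≠ 0) (hf : f ^ n = 1) :
    ‖LinearMap.trace K V f‖ ≤ finrank K V := by
  have hsplits := IsAlgClosed.splits f.charpoly
  have hroots : ∀ μ ∈ f.charpoly.roots, ‖μ‖ = 1 := fun μ hμ =>
    norm_eq_one_of_hasEigenvalue_of_pow_eq_one hn hf
      ((hasEigenvalue_iff_isRoot_charpoly f μ).mpr (Polynomial.isRoot_of_mem_roots hμ))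
  calc ‖LinearMap.trace K V f‖ = ‖f.charpoly.roots.sum‖ := by
        rw [trace_eq_sum_roots_charpoly_of_splits hsplits]
    _ ≤ (f.charpoly.roots.map (‖·‖)).sum := norm_multiset_sum_le _
    _ = Multiset.card f.charpoly.roots := by
        rw [Multiset.map_congr rfl hroots, Multiset.map_const', Multiset.sum_replicate,
          nsmul_one]
    _ = finrank K V := by
        rw [← hsplits.natDegree_eq_card_roots, LinearMap.charpoly_natDegree]

end Module.End

namespace FDRep

lemma norm_character_le_finrank {K G : Type*} [NormedField K] [IsAlgClosed K] [Monoid G]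
    (V : FDRep K G) {g : G} (hg : IsOfFinOrder g) :
    ‖V.character g‖ ≤ Module.finrank K V :=
  Module.End.norm_trace_le_finrank_of_pow_eq_one hg.orderOf_pos.ne' <| by
    rw [← map_pow, pow_orderOf_eq_one, map_one]

lemma finrank_ne_zero_of_simple {k G : Type*} [Field k] [Monoid G] (V : FDRep k G) [Simple V] :
    Module.finrank k V ≠ 0 := by
  intro h
  have : Subsingleton V := Module.finrank_zero_iff.mp h
  refine id_nonzero V (Action.hom_ext _ _ ?_)
  ext v
  exact Subsingleton.elim _ _

lemma norm_character_eq_finrank_of_mul_eq {G : Type*} [Monoid G] (V W : FDRep ℂ G) {g : G}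
    (hg : IsOfFinOrder g) (hV : Module.finrank ℂ V ≠ 0) (hW : Module.finrank ℂ W ≠ 0)
    (h : V.character g * W.character g = Module.finrank ℂ V * Module.finrank ℂ W) :
    ‖V.character g‖ = Module.finrank ℂ V ∧ ‖W.character g‖ = Module.finrank ℂ W := by
  have hWg : 0 < ‖W.character g‖ :=
    norm_pos_iff.mpr <| right_ne_zero_of_mul (a := V.character g) <| by
      rw [h]; exact_mod_cast mul_ne_zero hV hW
  refine (mul_eq_mul_iff_eq_and_eq_of_pos' (norm_character_le_finrank V hg)
    (norm_character_le_finrank W hg) (by exact_mod_cast Nat.pos_of_ne_zero hV) hWg).mp ?_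
  simpa only [norm_mul, Complex.norm_natCast] using congrArg norm h

end FDRep

/-- Let χ = αβ be irreducible, where central values of α are roots of unity of
π-number order and central values of β are roots of unity of π'-number order.
Then ker χ = ker α ∩ ker β. -/
theorem stmt6 (G : Type) [Group G] [Fintype G] (π : Set ℕ) (V W : FDRep ℂ G)
    (hirr : Simple (V ⊗ W))
    (hα : ∀ g : G, ‖V.character g‖ = (Module.finrank ℂ V : ℝ) →
      ∀ ζ : ℂˣ, (ζ : ℂ) = V.character g / V.character 1 →
        ∀ p : ℕ, p.Prime → p ∣ orderOf ζ → p ∈ π)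
    (hβ : ∀ g : G, ‖W.character g‖ = (Module.finrank ℂ W : ℝ) →
      ∀ ζ : ℂˣ, (ζ : ℂ) = W.character g / W.character 1 →
        ∀ p : ℕ, p.Prime → p ∣ orderOf ζ → p ∉ π) :
    {g : G | (V ⊗ W).character g = (V ⊗ W).character 1} =
      {g : G | V.character g = V.character 1} ∩
        {g : G | W.character g = W.character 1} := by
  have hχ (g : G) : (V ⊗ W).character g = V.character g * W.character g :=
    congrFun (char_tensor V W) g
  have hdim : Module.finrank ℂ V * Module.finrank ℂ W ≠ 0 := by
    rw [← Nat.cast_ne_zero (R := ℂ), Nat.cast_mul, ← char_one, ← char_one, ← hχ, char_one,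
      Nat.cast_ne_zero]
    exact finrank_ne_zero_of_simple (V ⊗ W)
  obtain ⟨hV0, hW0⟩ := mul_ne_zero_iff.mp hdim
  ext g
  simp only [Set.mem_ofPred_eq, Set.mem_inter_iff, hχ, char_one]
  refine ⟨fun h => ?_, fun ⟨hV, hW⟩ => by rw [hV, hW]⟩
  obtain ⟨hVg, hWg⟩ :=
    norm_character_eq_finrank_of_mul_eq V W (isOfFinOrder_of_finite g) hV0 hW0 h
  have hV0' : (Module.finrank ℂ V : ℂ) ≠ 0 := Nat.cast_ne_zero.mpr hV0
  have hW0' : (Module.finrank ℂ W : ℂ) ≠ 0 := Nat.cast_ne_zero.mpr hW0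
  have hVg0 : V.character g ≠ 0 := norm_ne_zero_iff.mp (hVg ▸ Nat.cast_ne_zero.mpr hV0)
  let ζ : ℂˣ := Units.mk0 (V.character g / Module.finrank ℂ V) (div_ne_zero hVg0 hV0')
  have hζinv : ((ζ⁻¹ : ℂˣ) : ℂ) = W.character g / Module.finrank ℂ W := by
    rw [Units.val_inv_eq_inv_val, Units.val_mk0, inv_div, div_eq_div_iff hVg0 hW0']
    linear_combination -h
  have hζ : ζ = 1 := by
    refine orderOf_eq_one_iff.mp (Nat.eq_one_iff_not_exists_prime_dvd.mpr fun p hp hpζ => ?_)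
    refine hβ g hWg ζ⁻¹ (by rw [hζinv, char_one]) p hp (by rwa [orderOf_inv]) ?_
    exact hα g hVg ζ (by rw [char_one]; rfl) p hp hpζ
  refine ⟨(div_eq_one_iff_eq hV0').mp (congrArg Units.val hζ), (div_eq_one_iff_eq hW0').mp ?_⟩
  rw [← hζinv, hζ, inv_one, Units.val_one]
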